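/- arXiv:2101.07878 — 3 statements merged into one kernel-verified Lean document; each statement's English description precedes it below -/
import Mathlib

section
/- The map σ^∞ counting semi-infinite bars in each degree is locally constant on the space of q-tame graded barcodes equipped with the bottleneck distance. -/
open scoped Classical
noncomputable section

/-- A bar: a pair `(a, b)` representing the interval `(a, b]` (with `b = ⊤` for `(a, ∞)`). -/
abbrev Bar : Type := ℝ × EReal

namespace Bar

/-- The interval `(a,b]` is nonempty. -/
def IsValid (I : Bar) : Prop := (I.1 : EReal) < I.2

/-- The length of a bar. -/
def len (I : Bar) : EReal := I.2 - (I.1 : EReal)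

/-- A bar is semi-infinite if its right endpoint is `+∞`. -/
def IsInf (I : Bar) : Prop := I.2 = ⊤

end Bar

/-- `I ⊆ J^{-δ}`, where `(a,b]^{-δ} = (a-δ, b+δ]`. -/
def barSub (I J : Bar) (δ : ℝ) : Prop :=
  J.1 - δ ≤ I.1 ∧ I.2 ≤ J.2 + (δ : EReal)

/-- A barcode: a multiset of nonempty intervals of the form `(a,b]` or `(a,∞)`,
recorded by its multiplicity function. -/
structure Barcode where
  mult : Bar → ℕ
  valid : ∀ I, mult I ≠ 0 → I.IsValid

namespace Barcode

/-- `m` is a `δ`-matching between the barcodes `B` and `B'`: it matches `m I J` copies of the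
bar `I` of `B` with copies of the bar `J` of `B'`; matched bars must be `δ`-close, and
unmatched (deleted) bars must have length at most `2δ`. -/
def IsMatching (B B' : Barcode) (δ : ℝ) (m : Bar → Bar → ℕ) : Prop :=
  (∀ I, {J | m I J ≠ 0}.Finite) ∧
  (∀ J, {I | m I J ≠ 0}.Finite) ∧
  (∀ I, ∑ᶠ J, m I J ≤ B.mult I) ∧
  (∀ J, ∑ᶠ I, m I J ≤ B'.mult J) ∧
  (∀ I, ∑ᶠ J, m I J < B.mult I → I.len ≤ ((2 * δ : ℝ) : EReal)) ∧
  (∀ J, ∑ᶠ I, m I J < B'.mult J → J.len ≤ ((2 * δ : ℝ) : EReal)) ∧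
  (∀ I J, m I J ≠ 0 → barSub I J δ ∧ barSub J I δ)

/-- `B` and `B'` admit a `δ`-matching. -/
def HasMatching (B B' : Barcode) (δ : ℝ) : Prop := ∃ m, IsMatching B B' δ m

/-- The bottleneck distance between two barcodes. -/
def bottleneck (B B' : Barcode) : EReal :=
  sInf {x : EReal | ∃ δ : ℝ, 0 ≤ δ ∧ x = (δ : EReal) ∧ HasMatching B B' δ}

/-- A barcode is finite if it has finitely many bars counted with multiplicity. -/
def IsFinite (B : Barcode) : Prop := {I | B.mult I ≠ 0}.Finite

/-- A barcode is q-tame if for every `ε > 0` it has finitely many bars of length `≥ ε`. -/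
def QTame (B : Barcode) : Prop :=
  ∀ ε : ℝ, 0 < ε → {I | B.mult I ≠ 0 ∧ (ε : EReal) ≤ I.len}.Finite

end Barcode

/-- A ℤ-graded barcode. -/
def GradedBarcode := ℤ → Barcode

namespace GradedBarcode

/-- A graded barcode is q-tame if for every `ε > 0` only finitely many bars (over all degrees)
have length `≥ ε`. -/
def QTame (B : GradedBarcode) : Prop :=
  ∀ ε : ℝ, 0 < ε → {p : ℤ × Bar | (B p.1).mult p.2 ≠ 0 ∧ (ε : EReal) ≤ p.2.len}.Finite

/-- The number of semi-infinite bars of `B` in degree `n`, counted with multiplicity. -/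
def sigmaInf (B : GradedBarcode) (n : ℤ) : ℕ :=
  ∑ᶠ (I : Bar) (_ : I.IsInf), (B n).mult I

/-- The graded bottleneck distance: supremum over the degrees of the degreewise
bottleneck distances. -/
def dist (B B' : GradedBarcode) : EReal :=
  ⨆ n : ℤ, Barcode.bottleneck (B n) (B' n)

end GradedBarcode


/-- If the bar `I` is semi-infinite and valid, its length is `⊤`. -/
lemma Bar.len_top_of_inf {I : Bar} (hI : I.IsInf) : I.len = ⊤ := by
  simp [Bar.len, Bar.IsInf] at hI ⊢
  rw [hI, EReal.top_sub_coe]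

/-- A matched partner of a semi-infinite bar is semi-infinite. -/
lemma inf_of_barSub {I J : Bar} {δ : ℝ} (h : barSub I J δ) (hI : I.IsInf) : J.IsInf := by
  rcases h with ⟨-, h2⟩
  rw [hI] at h2
  by_contra hJ
  exact absurd (lt_of_le_of_lt h2 (EReal.add_lt_top hJ (EReal.coe_ne_top δ))) (lt_irrefl _)

/-- Key counting lemma: a `δ`-matching preserves the number of semi-infinite bars. -/
lemma key_count (C C' : Barcode)
    (hC : {I : Bar | C.mult I ≠ 0 ∧ I.IsInf}.Finite)
    (hC' : {I : Bar | C'.mult I ≠ 0 ∧ I.IsInf}.Finite)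
    (δ : ℝ) (m : Bar → Bar → ℕ) (hm : Barcode.IsMatching C C' δ m) :
    (∑ᶠ (I : Bar) (_ : I.IsInf), C.mult I) = ∑ᶠ (J : Bar) (_ : J.IsInf), C'.mult J := by
  obtain ⟨h1, h2, h3, h4, h5, h6, h7⟩ := hm
  set T : Finset Bar := hC.toFinset with hT
  set T' : Finset Bar := hC'.toFinset with hT'
  -- membership characterizations
  have hmemT : ∀ I : Bar, I ∈ T ↔ C.mult I ≠ 0 ∧ I.IsInf := by
    intro I; simp [hT, Set.Finite.mem_toFinset]
  have hmemT' : ∀ J : Bar, J ∈ T' ↔ C'.mult J ≠ 0 ∧ J.IsInf := by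
    intro J; simp [hT', Set.Finite.mem_toFinset]
  -- nonzero matching implies nonzero multiplicities
  have hmultI : ∀ I J, m I J ≠ 0 → C.mult I ≠ 0 := by
    intro I J hIJ
    have : m I J ≤ ∑ᶠ J', m I J' := single_le_finsum J (h1 I) (fun _ => Nat.zero_le _)
    exact fun h0 => hIJ (Nat.le_zero.mp (le_trans this ((h3 I).trans_eq h0)))
  have hmultJ : ∀ I J, m I J ≠ 0 → C'.mult J ≠ 0 := by
    intro I J hIJ
    have : m I J ≤ ∑ᶠ I', m I' J := single_le_finsum I (h2 J) (fun _ => Nat.zero_le _)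
    exact fun h0 => hIJ (Nat.le_zero.mp (le_trans this ((h4 J).trans_eq h0)))
  -- semi-infinite bars are fully matched
  have hfullI : ∀ I : Bar, I.IsInf → ∑ᶠ J, m I J = C.mult I := by
    intro I hI
    refine le_antisymm (h3 I) ?_
    by_contra h
    have hlt : ∑ᶠ J, m I J < C.mult I := lt_of_not_ge h
    have := h5 I hlt
    rw [Bar.len_top_of_inf hI] at this
    exact absurd this (not_le_of_gt (EReal.coe_lt_top _))
  have hfullJ : ∀ J : Bar, J.IsInf → ∑ᶠ I, m I J = C'.mult J := by
    intro J hJ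
    refine le_antisymm (h4 J) ?_
    by_contra h
    have hlt : ∑ᶠ I, m I J < C'.mult J := lt_of_not_ge h
    have := h6 J hlt
    rw [Bar.len_top_of_inf hJ] at this
    exact absurd this (not_le_of_gt (EReal.coe_lt_top _))
  -- rewrite both sides as finite sums
  have lhs_eq : (∑ᶠ (I : Bar) (_ : I.IsInf), C.mult I) = ∑ I ∈ T, C.mult I := by
    have : ∀ I : Bar, (∑ᶠ _ : I.IsInf, C.mult I) = if I.IsInf then C.mult I else 0 :=
      fun I => finsum_eq_if
    rw [finsum_congr this]
    rw [finsum_eq_finset_sum_of_support_subset _ (s := T) ?sub]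
    · exact Finset.sum_congr rfl (fun I hI => if_pos ((hmemT I).mp hI).2)
    case sub =>
      intro I hI
      simp only [Function.mem_support, ne_eq, ite_eq_right_iff, not_forall] at hI
      exact (hmemT I).mpr ⟨hI.2, hI.1⟩
  have rhs_eq : (∑ᶠ (J : Bar) (_ : J.IsInf), C'.mult J) = ∑ J ∈ T', C'.mult J := by
    have : ∀ J : Bar, (∑ᶠ _ : J.IsInf, C'.mult J) = if J.IsInf then C'.mult J else 0 :=
      fun J => finsum_eq_if
    rw [finsum_congr this]
    rw [finsum_eq_finset_sum_of_support_subset _ (s := T') ?sub]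
    · exact Finset.sum_congr rfl (fun J hJ => if_pos ((hmemT' J).mp hJ).2)
    case sub =>
      intro J hJ
      simp only [Function.mem_support, ne_eq, ite_eq_right_iff, not_forall] at hJ
      exact (hmemT' J).mpr ⟨hJ.2, hJ.1⟩
  rw [lhs_eq, rhs_eq]
  -- middle computation
  have step1 : ∀ I ∈ T, C.mult I = ∑ J ∈ T', m I J := by
    intro I hI
    rw [← hfullI I ((hmemT I).mp hI).2]
    refine finsum_eq_finset_sum_of_support_subset _ ?_
    intro J hJ
    simp only [Function.mem_support, ne_eq] at hJ
    refine (hmemT' J).mpr ⟨hmultJ I J hJ, ?_⟩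
    exact inf_of_barSub (h7 I J hJ).1 ((hmemT I).mp hI).2
  have step2 : ∀ J ∈ T', C'.mult J = ∑ I ∈ T, m I J := by
    intro J hJ
    rw [← hfullJ J ((hmemT' J).mp hJ).2]
    refine finsum_eq_finset_sum_of_support_subset _ ?_
    intro I hI
    simp only [Function.mem_support, ne_eq] at hI
    refine (hmemT I).mpr ⟨hmultI I J hI, ?_⟩
    exact inf_of_barSub (h7 I J hI).2 ((hmemT' J).mp hJ).2
  calc ∑ I ∈ T, C.mult I = ∑ I ∈ T, ∑ J ∈ T', m I J := Finset.sum_congr rfl step1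
    _ = ∑ J ∈ T', ∑ I ∈ T, m I J := Finset.sum_comm
    _ = ∑ J ∈ T', C'.mult J := Finset.sum_congr rfl (fun J hJ => (step2 J hJ).symm)

/-- Q-tameness gives finitely many semi-infinite bars in each degree. -/
lemma qtame_inf_finite {B : GradedBarcode} (hB : B.QTame) (n : ℤ) :
    {I : Bar | (B n).mult I ≠ 0 ∧ I.IsInf}.Finite := by
  have h := hB 1 one_pos
  have : {I : Bar | (B n).mult I ≠ 0 ∧ I.IsInf}
      ⊆ (fun I => (n, I)) ⁻¹' {p : ℤ × Bar | (B p.1).mult p.2 ≠ 0 ∧ ((1:ℝ) : EReal) ≤ p.2.len} := by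
    intro I ⟨h1, h2⟩
    refine ⟨h1, ?_⟩
    rw [Bar.len_top_of_inf h2]
    exact le_top
  exact Set.Finite.subset (Set.Finite.preimage (fun _ _ _ _ h => (Prod.mk.injEq _ _ _ _ ▸ h).2) h) this

/-- The map `σ^∞` counting semi-infinite bars in each degree is locally
constant on the space of q-tame graded barcodes with the bottleneck distance. -/
theorem sigmaInf_locally_constant (B : GradedBarcode) (hB : B.QTame) :
    ∃ ε : ℝ, 0 < ε ∧ ∀ B' : GradedBarcode, B'.QTame →
      GradedBarcode.dist B B' < (ε : EReal) → ∀ n : ℤ, B.sigmaInf n = B'.sigmaInf n := by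
  refine ⟨1, one_pos, fun B' hB' hd n => ?_⟩
  have hb : Barcode.bottleneck (B n) (B' n) < ((1:ℝ) : EReal) :=
    lt_of_le_of_lt (le_iSup (fun k => Barcode.bottleneck (B k) (B' k)) n) hd
  rw [Barcode.bottleneck, sInf_lt_iff] at hb
  obtain ⟨x, ⟨δ, hδ0, rfl, m, hm⟩, -⟩ := hb
  exact key_count (B n) (B' n) (qtame_inf_finite hB n) (qtame_inf_finite hB' n) δ m hm
end
end

section
/- For any q-tame graded barcode B, the family of barcodes B_t, t ∈ [0,1], obtained by rescaling all endpoints of bars of B by the factor (1−t) (so a finite bar (a,b] becomes ((1−t)a, (1−t)b] and an infinite bar (a,∞) becomes ((1−t)a, ∞)), is a continuous path in the bottleneck distance from B to the barcode whose bars are exactly one copy of (0,∞) in each degree for each infinite bar of B. -/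
open scoped Classical
noncomputable section

/-- Rescale a bar by a factor `c`: `(a,b] ↦ (ca, cb]`, `(a,∞) ↦ (ca, ∞)`. -/
def scaleBar (c : ℝ) (J : Bar) : Bar :=
  (c * J.1, if J.2 = ⊤ then ⊤ else (c : EReal) * J.2)

/-- The barcode obtained from `B` by rescaling all endpoints of its bars by `c`
(bars that become empty are deleted). -/
def Barcode.scale (B : Barcode) (c : ℝ) : Barcode where
  mult I := if I.IsValid then ∑ᶠ (J : Bar) (_ : scaleBar c J = I), B.mult J else 0
  valid I h := by
    try dsimp only at h
    by_cases hv : I.IsValid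
    · exact hv
    · rw [if_neg hv] at h; exact absurd rfl h

/-- Degreewise rescaling of a graded barcode. -/
def GradedBarcode.scale (B : GradedBarcode) (c : ℝ) : GradedBarcode :=
  fun n => (B n).scale c

/-- The graded barcode having, in each degree `n`, exactly `σ^∞(B)(n)` copies of the bar
`(0, ∞)` and no other bars. -/
def GradedBarcode.infSkeleton (B : GradedBarcode) : GradedBarcode := fun n =>
  { mult := fun I => if I = ((0 : ℝ), (⊤ : EReal)) then B.sigmaInf n else 0
    valid := fun I h => by
      try dsimp only at h
      by_cases hI : I = ((0 : ℝ), (⊤ : EReal))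
      · subst hI; exact EReal.coe_lt_top 0
      · rw [if_neg hI] at h; exact absurd rfl h }

/-!
Rescaling by `c` moves each finite endpoint `x` to `c x`, so two rescalings by `c` and `c'` move
it apart by `|c - c'| |x|`. By q-tameness only finitely many bars have length `≥ ε`, so their
endpoints are bounded by some `M`, and once `|c - c'| M ≤ ε / 2` matching the two rescalings of
every long bar is an `ε/2`-matching, uniformly in the degree. A bar left unmatched is either
the rescaling of a short bar (and `c ≤ 1` keeps it short), or of a long finite bar that
collapses at `c' = 0`, in which case its length is `|c - c'|` times the original one.
-/

open Function

lemma Bar.isValid_cases {a : ℝ} {b : EReal} (h : Bar.IsValid (a, b)) :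
    b = ⊤ ∨ ∃ r : ℝ, b = r ∧ a < r := by
  induction b using EReal.rec with
  | bot => exact absurd h (by simp [Bar.IsValid])
  | coe r => exact Or.inr ⟨r, rfl, EReal.coe_lt_coe_iff.1 h⟩
  | top => exact Or.inl rfl

lemma Bar.len_coe (a r : ℝ) : Bar.len (a, (r : EReal)) = ((r - a : ℝ) : EReal) := by
  simp [Bar.len, EReal.coe_sub]

lemma Bar.len_of_isInf {J : Bar} (hJ : J.IsInf) : J.len = ⊤ := by
  rw [Bar.len, hJ]
  exact EReal.top_sub_coe _

lemma scaleBar_top (c a : ℝ) : scaleBar c (a, ⊤) = (c * a, ⊤) := by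
  simp [scaleBar]

lemma scaleBar_coe (c a r : ℝ) :
    scaleBar c (a, (r : EReal)) = (c * a, ((c * r : ℝ) : EReal)) := by
  simp [scaleBar, EReal.coe_mul]

lemma scaleBar_one (J : Bar) : scaleBar 1 J = J := by
  obtain ⟨a, b⟩ := J
  by_cases hb : b = ⊤ <;> simp [scaleBar, hb]

lemma isValid_scaleBar_coe_iff {c a r : ℝ} :
    (scaleBar c (a, (r : EReal))).IsValid ↔ c * a < c * r := by
  rw [scaleBar_coe, Bar.IsValid, EReal.coe_lt_coe_iff]

lemma isValid_scaleBar_of_isInf (c : ℝ) {J : Bar} (hJ : J.IsInf) : (scaleBar c J).IsValid := by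
  obtain ⟨a, b⟩ := J
  change b = ⊤ at hJ
  subst hJ
  exact EReal.coe_lt_top _

lemma isValid_scaleBar_of_pos {c : ℝ} (hc : 0 < c) {J : Bar} (hJ : J.IsValid) :
    (scaleBar c J).IsValid := by
  obtain ⟨a, b⟩ := J
  rcases Bar.isValid_cases hJ with rfl | ⟨r, rfl, har⟩
  · exact isValid_scaleBar_of_isInf c rfl
  · exact isValid_scaleBar_coe_iff.2 (mul_lt_mul_of_pos_left har hc)

lemma isInf_of_isValid_scaleBar_zero {J : Bar} (hJ : J.IsValid) (h : (scaleBar 0 J).IsValid) :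
    J.IsInf := by
  obtain ⟨a, b⟩ := J
  rcases Bar.isValid_cases hJ with rfl | ⟨r, rfl, -⟩
  · rfl
  · exact absurd (isValid_scaleBar_coe_iff.1 h) (by simp)

lemma scaleBar_zero_of_isInf {J : Bar} (hJ : J.IsInf) : scaleBar 0 J = ((0 : ℝ), ⊤) := by
  obtain ⟨a, b⟩ := J
  change b = ⊤ at hJ
  subst hJ
  simp [scaleBar_top]

lemma scaleBar_injOn {c : ℝ} (hc : 0 < c) : Set.InjOn (scaleBar c) {J | J.IsValid} := by
  rintro ⟨a, b⟩ hJ ⟨a', b'⟩ hJ' h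
  rcases Bar.isValid_cases hJ with rfl | ⟨r, rfl, -⟩ <;>
    rcases Bar.isValid_cases hJ' with rfl | ⟨r', rfl, -⟩ <;>
    simp only [scaleBar_top, scaleBar_coe, Prod.mk.injEq, EReal.coe_ne_top, EReal.top_ne_coe,
      EReal.coe_eq_coe_iff, mul_right_inj' hc.ne', and_false, and_true] at h ⊢ <;>
    exact h

lemma barSub_scaleBar {c c' δ : ℝ} {J : Bar} (hJ : J.IsValid)
    (h₁ : |c - c'| * |J.1| ≤ δ) (h₂ : |c - c'| * |J.2.toReal| ≤ δ) :
    barSub (scaleBar c J) (scaleBar c' J) δ := by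
  obtain ⟨a, b⟩ := J
  have ha := abs_le.1 ((abs_mul (c - c') a).trans_le h₁)
  rcases Bar.isValid_cases hJ with rfl | ⟨r, rfl, -⟩
  · simp only [scaleBar_top, barSub, EReal.top_add_coe, le_top, and_true]
    linarith
  · have hr := abs_le.1 ((abs_mul (c - c') r).trans_le (by simpa using h₂))
    simp only [scaleBar_coe, barSub, ← EReal.coe_add, EReal.coe_le_coe_iff]
    constructor <;> linarith

namespace Barcode

lemma ext {B B' : Barcode} (h : B.mult = B'.mult) : B = B' := by
  cases B; cases B'; cases h; rfl

lemma scale_mult (B : Barcode) (c : ℝ) (I : Bar) :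
    (B.scale c).mult I =
      if I.IsValid then ∑ᶠ J ∈ {J : Bar | scaleBar c J = I}, B.mult J else 0 := rfl

@[simp]
lemma scale_one (B : Barcode) : B.scale 1 = B := by
  refine ext (funext fun I => ?_)
  rw [scale_mult]
  simp_rw [scaleBar_one, Set.ofPred_eq_eq_singleton, finsum_mem_singleton]
  split_ifs with hI
  · rfl
  · exact (not_imp_comm.1 (B.valid I) hI).symm

end Barcode

@[simp]
lemma GradedBarcode.scale_one (B : GradedBarcode) : B.scale 1 = B :=
  funext fun n => (B n).scale_one

lemma GradedBarcode.scale_zero (B : GradedBarcode) : B.scale 0 = B.infSkeleton := by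
  funext n
  refine Barcode.ext (funext fun I => ?_)
  show (if I.IsValid then ∑ᶠ (J) (_ : scaleBar 0 J = I), (B n).mult J else 0) =
    if I = ((0 : ℝ), ⊤) then ∑ᶠ (J) (_ : J.IsInf), (B n).mult J else 0
  have hfiber : ∀ J, (B n).mult J ≠ 0 → I.IsValid → scaleBar 0 J = I → J.IsInf :=
    fun J hJ hI hJI => isInf_of_isValid_scaleBar_zero ((B n).valid J hJ) (hJI ▸ hI)
  by_cases hI0 : I = ((0 : ℝ), ⊤)
  · have hI : I.IsValid := hI0 ▸ EReal.coe_lt_top 0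
    rw [if_pos hI, if_pos hI0]
    refine finsum_congr fun J => ?_
    by_cases hJ : (B n).mult J = 0
    · simp [hJ]
    · have : scaleBar 0 J = I ↔ J.IsInf :=
        ⟨hfiber J hJ hI, fun h => hI0 ▸ scaleBar_zero_of_isInf h⟩
      simp only [this]
  · rw [if_neg hI0]
    split_ifs with hI
    · refine finsum_eq_zero_of_forall_eq_zero fun J => ?_
      rw [finsum_eq_if, ite_eq_right_iff]
      intro hJI
      by_contra hJ
      exact hI0 (hJI ▸ scaleBar_zero_of_isInf (hfiber J hJ hI hJI))
    · rfl

section Finsum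

variable {α β M : Type*} [AddCommMonoid M] [DecidableEq β]

lemma support_sum_filter_subset (T : Finset α) (g : α → β) (f : α → M) :
    support (fun y => ∑ x ∈ T with g x = y, f x) ⊆ T.image g := by
  intro y hy
  obtain ⟨x, hx, -⟩ := Finset.exists_ne_zero_of_sum_ne_zero hy
  obtain ⟨hxT, rfl⟩ := Finset.mem_filter.1 hx
  exact Finset.mem_image_of_mem g hxT

lemma finsum_sum_filter_eq (T : Finset α) (g : α → β) (f : α → M) :
    ∑ᶠ y, ∑ x ∈ T with g x = y, f x = ∑ x ∈ T, f x := by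
  rw [finsum_eq_sum_of_support_subset _ (support_sum_filter_subset T g f),
    Finset.sum_fiberwise_of_maps_to fun x hx => Finset.mem_image_of_mem g hx]

lemma exists_mem_notMem_of_sum_lt_finsum_mem [Preorder M] {f : α → M} {A : Set α}
    {T : Finset α} (hT : ↑T ⊆ A) (h : ∑ x ∈ T, f x < ∑ᶠ x ∈ A, f x) :
    ∃ x ∈ A, f x ≠ 0 ∧ x ∉ T := by
  by_contra! H
  rw [finsum_mem_eq_sum_of_subset f (fun x hx => H x hx.1 hx.2) hT] at h
  exact lt_irrefl _ h

end Finsum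

namespace Barcode

variable {B : Barcode} {S : Finset Bar} {ε δ c c' : ℝ}

lemma finite_fiber_scaleBar (hc : 0 ≤ c) (hinf : {J | B.mult J ≠ 0 ∧ J.IsInf}.Finite)
    {I : Bar} (hI : I.IsValid) : ({J | scaleBar c J = I} ∩ support B.mult).Finite := by
  rcases hc.eq_or_lt with rfl | hc
  · refine hinf.subset fun J ⟨hJI, hJ⟩ => ⟨hJ, ?_⟩
    exact isInf_of_isValid_scaleBar_zero (B.valid J hJ) (hJI ▸ hI)
  · refine Set.Subsingleton.finite fun J ⟨hJI, hJ⟩ K ⟨hKI, hK⟩ => ?_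
    exact scaleBar_injOn hc (B.valid J hJ) (B.valid K hK) (hJI.trans hKI.symm)

def scaleMatchedBars (S : Finset Bar) (c c' : ℝ) : Finset Bar :=
  {J ∈ S | (scaleBar c J).IsValid ∧ (scaleBar c' J).IsValid}

def scaleMatching (B : Barcode) (S : Finset Bar) (c c' : ℝ) (I I' : Bar) : ℕ :=
  ∑ J ∈ {J ∈ scaleMatchedBars S c c' | scaleBar c J = I} with scaleBar c' J = I', B.mult J

lemma scaleMatching_swap (B : Barcode) (S : Finset Bar) (c c' : ℝ) (I I' : Bar) :
    B.scaleMatching S c c' I I' = B.scaleMatching S c' c I' I := by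
  simp only [scaleMatching, scaleMatchedBars, Finset.filter_filter]
  refine Finset.sum_congr (Finset.filter_congr fun J _ => ?_) fun _ _ => rfl
  constructor <;> exact fun ⟨⟨⟨hv, hv'⟩, hI⟩, hI'⟩ => ⟨⟨⟨hv', hv⟩, hI'⟩, hI⟩

lemma finite_scaleMatching_row (B : Barcode) (S : Finset Bar) (c c' : ℝ) (I : Bar) :
    {I' | B.scaleMatching S c c' I I' ≠ 0}.Finite := by
  unfold scaleMatching
  exact (Finset.finite_toSet _).subset (support_sum_filter_subset _ _ _)

lemma finsum_scaleMatching_row (B : Barcode) (S : Finset Bar) (c c' : ℝ) (I : Bar) :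
    ∑ᶠ I', B.scaleMatching S c c' I I' =
      ∑ J ∈ scaleMatchedBars S c c' with scaleBar c J = I, B.mult J := by
  unfold scaleMatching
  exact finsum_sum_filter_eq _ _ _

section LongBars

variable (hS : ∀ J, J ∈ S ↔ B.mult J ≠ 0 ∧ (ε : EReal) ≤ J.len)
include hS

lemma finsum_scaleMatching_row_le (hc : 0 ≤ c) (I : Bar) :
    ∑ᶠ I', B.scaleMatching S c c' I I' ≤ (B.scale c).mult I := by
  have hinf : {J | B.mult J ≠ 0 ∧ J.IsInf}.Finite :=
    S.finite_toSet.subset fun J ⟨hJ, hJinf⟩ =>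
      (hS J).2 ⟨hJ, (Bar.len_of_isInf hJinf).symm ▸ le_top⟩
  rw [finsum_scaleMatching_row, scale_mult]
  split_ifs with hI
  · have hfin := finite_fiber_scaleBar hc hinf hI
    rw [finsum_mem_eq_sum _ hfin]
    refine Finset.sum_le_sum_of_ne_zero fun J hJ hJ0 => hfin.mem_toFinset.2 ⟨?_, hJ0⟩
    exact (Finset.mem_filter.1 hJ).2
  · refine (Finset.sum_eq_zero fun J hJ => ?_).le
    simp only [scaleMatchedBars, Finset.mem_filter] at hJ
    exact absurd (hJ.2 ▸ hJ.1.2.1) hI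

lemma len_le_of_finsum_scaleMatching_row_lt (hc : c ∈ Set.Icc 0 1) (hc' : 0 ≤ c')
    (hε : ε ≤ 2 * δ)
    (hmove : ∀ J ∈ S, |c - c'| * |J.1| ≤ δ ∧ |c - c'| * |J.2.toReal| ≤ δ) {I : Bar}
    (hlt : ∑ᶠ I', B.scaleMatching S c c' I I' < (B.scale c).mult I) :
    I.len ≤ ((2 * δ : ℝ) : EReal) := by
  rw [finsum_scaleMatching_row, scale_mult] at hlt
  have hI : I.IsValid := by
    by_contra hI
    rw [if_neg hI] at hlt
    exact Nat.not_lt_zero _ hlt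
  rw [if_pos hI] at hlt
  obtain ⟨⟨a, b⟩, hJI, hJ0, hJT⟩ := exists_mem_notMem_of_sum_lt_finsum_mem
    (T := {J ∈ scaleMatchedBars S c c' | scaleBar c J = I}) (A := {J | scaleBar c J = I})
    (fun J hJ => (Finset.mem_filter.1 hJ).2) hlt
  rw [Set.mem_ofPred_eq] at hJI
  have hmatched : (a, b) ∈ S → ¬ (scaleBar c' (a, b)).IsValid := fun hJS hJ' =>
    hJT (Finset.mem_filter.2 ⟨Finset.mem_filter.2 ⟨hJS, hJI ▸ hI, hJ'⟩, hJI⟩)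
  rcases Bar.isValid_cases (B.valid _ hJ0) with rfl | ⟨r, rfl, har⟩
  · have hinf : Bar.IsInf (a, ⊤) := rfl
    exact absurd (isValid_scaleBar_of_isInf c' hinf)
      (hmatched ((hS _).2 ⟨hJ0, (Bar.len_of_isInf hinf).symm ▸ le_top⟩))
  rw [← hJI, scaleBar_coe, Bar.len_coe, EReal.coe_le_coe_iff]
  obtain ⟨hc0, hc1⟩ := hc
  by_cases hJS : (a, (r : EReal)) ∈ S
  · -- a long bar is deleted only when it collapses at `c' = 0`
    have hc'0 : c' = 0 := by
      by_contra hne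
      exact hmatched hJS (isValid_scaleBar_of_pos (hc'.lt_of_ne' hne) (B.valid _ hJ0))
    obtain ⟨ha, hr⟩ := hmove _ hJS
    simp only [hc'0, sub_zero, EReal.toReal_coe, ← abs_mul] at ha hr
    linarith [abs_le.1 ha, abs_le.1 hr]
  · have hshort : r - a < ε := by
      by_contra! h
      exact hJS ((hS _).2 ⟨hJ0, by rw [Bar.len_coe]; exact_mod_cast h⟩)
    nlinarith

end LongBars

lemma bottleneck_le_of_hasMatching {B' : Barcode} (hδ : 0 ≤ δ) (h : B.HasMatching B' δ) :
    B.bottleneck B' ≤ δ :=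
  sInf_le ⟨δ, hδ, rfl, h⟩

lemma isMatching_scaleMatching
    (hS : ∀ J, J ∈ S ↔ B.mult J ≠ 0 ∧ (ε : EReal) ≤ J.len)
    (hc : c ∈ Set.Icc 0 1) (hc' : c' ∈ Set.Icc 0 1) (hε : ε ≤ 2 * δ)
    (hmove : ∀ J ∈ S, |c - c'| * |J.1| ≤ δ ∧ |c - c'| * |J.2.toReal| ≤ δ) :
    (B.scale c).IsMatching (B.scale c') δ (B.scaleMatching S c c') := by
  have hmove' : ∀ J ∈ S, |c' - c| * |J.1| ≤ δ ∧ |c' - c| * |J.2.toReal| ≤ δ := by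
    simpa only [abs_sub_comm c] using hmove
  refine ⟨finite_scaleMatching_row B S c c', fun I' => ?_, finsum_scaleMatching_row_le hS hc.1,
    fun I' => ?_, fun _ => len_le_of_finsum_scaleMatching_row_lt hS hc hc'.1 hε hmove,
    fun I' => ?_, fun I I' hII' => ?_⟩
  · simpa only [scaleMatching_swap B S c c'] using finite_scaleMatching_row B S c' c I'
  · simpa only [scaleMatching_swap B S c c'] using finsum_scaleMatching_row_le hS hc'.1 I'
  · simpa only [scaleMatching_swap B S c c'] using
      len_le_of_finsum_scaleMatching_row_lt hS hc' hc.1 hε hmove' (I := I')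
  obtain ⟨J, hJ, -⟩ := Finset.exists_ne_zero_of_sum_ne_zero hII'
  simp only [scaleMatchedBars, Finset.mem_filter] at hJ
  obtain ⟨⟨⟨hJS, -⟩, rfl⟩, rfl⟩ := hJ
  have hJ : J.IsValid := B.valid J ((hS J).1 hJS).1
  exact ⟨barSub_scaleBar hJ (hmove J hJS).1 (hmove J hJS).2,
    barSub_scaleBar hJ (hmove' J hJS).1 (hmove' J hJS).2⟩

lemma hasMatching_scale (hB : {I | B.mult I ≠ 0 ∧ (ε : EReal) ≤ I.len}.Finite)
    (hc : c ∈ Set.Icc 0 1) (hc' : c' ∈ Set.Icc 0 1) (hε : ε ≤ 2 * δ)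
    (hmove : ∀ J, B.mult J ≠ 0 → (ε : EReal) ≤ J.len →
      |c - c'| * |J.1| ≤ δ ∧ |c - c'| * |J.2.toReal| ≤ δ) :
    (B.scale c).HasMatching (B.scale c') δ :=
  ⟨_, isMatching_scaleMatching (fun _ => hB.mem_toFinset) hc hc' hε
    fun J hJ => hmove J (hB.mem_toFinset.1 hJ).1 (hB.mem_toFinset.1 hJ).2⟩

end Barcode

namespace GradedBarcode

variable {B : GradedBarcode}

lemma QTame.barcode (hB : B.QTame) (n : ℤ) : (B n).QTame := fun ε hε =>
  (hB ε hε).preimage (Prod.mk_right_injective n).injOn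

lemma QTame.exists_endpoint_bound (hB : B.QTame) {ε : ℝ} (hε : 0 < ε) :
    ∃ M : ℝ, 0 ≤ M ∧ ∀ n J, (B n).mult J ≠ 0 → (ε : EReal) ≤ J.len →
      |J.1| ≤ M ∧ |J.2.toReal| ≤ M := by
  obtain ⟨M, hM⟩ :=
    ((hB ε hε).image fun p : ℤ × Bar => max |p.2.1| |p.2.2.toReal|).bddAbove
  refine ⟨max M 0, le_max_right _ _, fun n J hJ hJε => max_le_iff.1 ?_⟩
  exact (hM ⟨(n, J), ⟨hJ, hJε⟩, rfl⟩).trans (le_max_left _ _)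

end GradedBarcode

/-- For a q-tame graded barcode `B`, rescaling all bars by `(1-t)` gives a
path, continuous in the bottleneck distance, from `B` (at `t = 0`) to the barcode with exactly
one bar `(0,∞)` in each degree for each infinite bar of `B` (at `t = 1`). -/
theorem scale_path_continuous (B : GradedBarcode) (hB : B.QTame) :
    (∀ t ∈ Set.Icc (0 : ℝ) 1, ∀ ε : ℝ, 0 < ε → ∃ η : ℝ, 0 < η ∧
      ∀ s ∈ Set.Icc (0 : ℝ) 1, |s - t| < η →
        GradedBarcode.dist (B.scale (1 - s)) (B.scale (1 - t)) < (ε : EReal)) ∧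
    B.scale (1 - 0) = B ∧
    B.scale (1 - 1) = B.infSkeleton := by
  refine ⟨fun t ht ε hε => ?_, by simp, by simpa using B.scale_zero⟩
  obtain ⟨M, hM0, hM⟩ := hB.exists_endpoint_bound hε
  refine ⟨ε / 2 / (M + 1), by positivity, fun s hs hst => ?_⟩
  have hmove : ∀ x : ℝ, |x| ≤ M → |(1 - s) - (1 - t)| * |x| ≤ ε / 2 := fun x hx =>
    calc |(1 - s) - (1 - t)| * |x| ≤ ε / 2 / (M + 1) * (M + 1) := by
          rw [show (1 - s) - (1 - t) = -(s - t) by ring, abs_neg]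
          gcongr
          linarith
      _ = ε / 2 := by field_simp
  have one_sub_mem : ∀ u ∈ Set.Icc (0 : ℝ) 1, 1 - u ∈ Set.Icc (0 : ℝ) 1 :=
    fun u hu => ⟨by linarith [hu.2], by linarith [hu.1]⟩
  calc GradedBarcode.dist (B.scale (1 - s)) (B.scale (1 - t))
      ≤ ((ε / 2 : ℝ) : EReal) := iSup_le fun n =>
        Barcode.bottleneck_le_of_hasMatching (by positivity) <|
          Barcode.hasMatching_scale (hB.barcode n ε hε) (one_sub_mem s hs) (one_sub_mem t ht)
            (by linarith)
            fun J hJ hJε => (hM n J hJ hJε).imp (hmove _) (hmove _)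
    _ < ε := EReal.coe_lt_coe_iff.2 (half_lt_self hε)
end
end

section
/- Interval persistence modules K^J (for J of the form (a,b] or (a,+∞)) satisfy: K^{(a,b]} and K^{(a',b']} are δ-interleaved if and only if either |a−a'| ≤ δ and |b−b'| ≤ δ, or both intervals have length ≤ 2δ. -/
noncomputable section

universe u

/-- A persistence module over a field `K`: a family of finite dimensional `K`-vector spaces
`(V^t)_{t ∈ ℝ}` with functorial structure maps `i^s_t : V^s → V^t` for `s ≤ t`, vanishing for
`t` sufficiently negative. -/
structure PersMod (K : Type u) [Field K] where
  V : ℝ → Type u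
  [acg : ∀ t, AddCommGroup (V t)]
  [mod : ∀ t, Module K (V t)]
  map : ∀ {s t : ℝ}, s ≤ t → (V s →ₗ[K] V t)
  map_id : ∀ t : ℝ, map (le_refl t) = LinearMap.id
  map_comp : ∀ {r s t : ℝ} (h1 : r ≤ s) (h2 : s ≤ t),
    (map h2).comp (map h1) = map (h1.trans h2)
  findim : ∀ t, FiniteDimensional K (V t)
  bdd : ∃ T : ℝ, ∀ t < T, ∀ v : V t, v = 0

attribute [instance] PersMod.acg PersMod.mod PersMod.findim

variable {K : Type u} [Field K]

/-- A `(δ,ε)`-interleaving between the persistence modules `M` and `N`: morphisms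
`f : M → N[δ]` and `g : N → M[ε]` whose composites are the shift morphisms `sh(δ+ε)`. -/
structure Interleaving (M N : PersMod K) (δ ε : ℝ) where
  hδ : 0 ≤ δ
  hε : 0 ≤ ε
  f : ∀ t : ℝ, M.V t →ₗ[K] N.V (t + δ)
  g : ∀ t : ℝ, N.V t →ₗ[K] M.V (t + ε)
  f_nat : ∀ (s t : ℝ) (h : s ≤ t),
    (f t).comp (M.map h) = (N.map (by linarith : s + δ ≤ t + δ)).comp (f s)
  g_nat : ∀ (s t : ℝ) (h : s ≤ t),
    (g t).comp (N.map h) = (M.map (by linarith : s + ε ≤ t + ε)).comp (g s)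
  gf : ∀ t : ℝ, (g (t + δ)).comp (f t) = M.map (by linarith : t ≤ t + δ + ε)
  fg : ∀ t : ℝ, (f (t + ε)).comp (g t) = N.map (by linarith : t ≤ t + ε + δ)

/-- `M` and `N` are `δ`-interleaved. -/
def Interleaved (M N : PersMod K) (δ : ℝ) : Prop := Nonempty (Interleaving M N δ δ)

/-- The interleaving distance between two persistence modules. -/
def dInter (M N : PersMod K) : EReal :=
  sInf {x : EReal | ∃ δ : ℝ, 0 ≤ δ ∧ x = (δ : EReal) ∧ Interleaved M N δ}

open scoped Classical in
/-- The submodule of `K` equal to `K` when `P` holds and to `0` otherwise. -/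
def condSub (K : Type u) [Field K] (P : Prop) : Submodule K K where
  carrier := {x | x = 0 ∨ P}
  add_mem' := by
    intro x y hx hy
    rcases hx with rfl | h
    · simpa using hy
    · exact Or.inr h
  zero_mem' := Or.inl rfl
  smul_mem' := by
    intro c x hx
    rcases hx with rfl | h
    · exact Or.inl (by simp)
    · exact Or.inr h

open scoped Classical in
/-- The structure map of an interval module: the identity within the interval, zero
otherwise. -/
def intervalMap (K : Type u) [Field K] (P Q : Prop) :
    ↥(condSub K P) →ₗ[K] ↥(condSub K Q) where
  toFun x := ⟨if Q then (x : K) else 0, by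
    split_ifs with h
    · rcases x.2 with h0 | _
      · exact Or.inl h0
      · exact Or.inr h
    · exact Or.inl rfl⟩
  map_add' x y := by
    ext
    simp only [Submodule.coe_add]
    split_ifs <;> simp
  map_smul' c x := by
    ext
    simp only [Submodule.coe_smul, RingHom.id_apply]
    split_ifs <;> simp

open scoped Classical in
/-- The interval persistence module `K^{(a,b]}` (with `b = ⊤` giving `K^{(a,∞)}`). -/
def IntervalMod (K : Type u) [Field K] (a : ℝ) (b : EReal) : PersMod K where
  V t := ↥(condSub K (a < t ∧ (t : EReal) ≤ b))
  map {s t} hst := intervalMap K _ _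
  map_id t := by
    apply LinearMap.ext
    intro x
    ext
    simp only [intervalMap, LinearMap.coe_mk, AddHom.coe_mk, LinearMap.id_coe, id_eq]
    split_ifs with h
    · rfl
    · exact ((x.2.resolve_right h)).symm
  map_comp {r s t} h1 h2 := by
    apply LinearMap.ext
    intro x
    ext
    simp only [intervalMap, LinearMap.coe_comp, Function.comp_apply, LinearMap.coe_mk,
      AddHom.coe_mk]
    split_ifs with ht hs
    · rfl
    · -- t ∈ J but s ∉ J: then x must be 0
      rcases x.2 with h0 | hr
      · exact h0.symm
      · exact absurd ⟨lt_of_lt_of_le hr.1 h1,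
          le_trans (EReal.coe_le_coe_iff.mpr h2) ht.2⟩ hs
    · rfl
  findim t := inferInstance
  bdd := by
    refine ⟨a, fun t ht v => ?_⟩
    ext
    have := v.2.resolve_right (fun hc => absurd hc.1 (not_lt.mpr ht.le))
    simpa using this

/-! In a `δ`-interleaving of `K^{(a,b]}` with `K^{(a',b']}`, the shift `t ↦ t + 2δ` of each
module factors through the other one at `t + δ`. If `(a,b]` is longer than `2δ` this shift is
nonzero for every `t ∈ (a, b - 2δ]`, so all these `t + δ` lie in `(a',b']`, which forces
`a' ≤ a + δ` and `b ≤ b' + δ`; the two directions together give the endpoint bounds unless both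
intervals are short. Conversely, for close endpoints the maps that are the identity wherever both
sides are `K` form an interleaving, and for two short intervals the shifts vanish, so the zero
maps form one. -/

theorem intervalMap_comp {P Q R : Prop} (h : P → R → Q) :
    (intervalMap K Q R).comp (intervalMap K P Q) = intervalMap K P R := by
  ext x
  simp only [intervalMap, LinearMap.coe_comp, Function.comp_apply, LinearMap.coe_mk,
    AddHom.coe_mk]
  split_ifs with hR hQ
  · rfl
  · exact (x.2.resolve_right fun hP => hQ (h hP hR)).symm
  · rfl

theorem intervalMap_eq_zero_iff {P Q : Prop} : intervalMap K P Q = 0 ↔ ¬(P ∧ Q) := by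
  constructor
  · rintro h ⟨hP, hQ⟩
    have h1 := congrArg (fun φ => (φ ⟨1, Or.inr hP⟩ : K)) h
    simp [intervalMap, if_pos hQ] at h1
  · intro h
    ext x
    simp only [intervalMap, LinearMap.coe_mk, AddHom.coe_mk, LinearMap.zero_apply,
      ZeroMemClass.coe_zero]
    split_ifs with hQ
    · exact x.2.resolve_right fun hP => h ⟨hP, hQ⟩
    · rfl

theorem nontrivial_condSub_iff {P : Prop} : Nontrivial (condSub K P) ↔ P := by
  constructor
  · intro
    obtain ⟨x, hx⟩ := exists_ne (0 : condSub K P)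
    exact x.2.resolve_left fun h0 => hx (Subtype.ext h0)
  · intro hP
    exact ⟨⟨1, Or.inr hP⟩, 0, fun h => one_ne_zero (congrArg Subtype.val h)⟩

namespace Interleaving

variable {M N : PersMod K} {δ ε : ℝ}

def symm (I : Interleaving M N δ ε) : Interleaving N M ε δ where
  hδ := I.hε
  hε := I.hδ
  f := I.g
  g := I.f
  f_nat := I.g_nat
  g_nat := I.f_nat
  gf := I.fg
  fg := I.gf

def ofMapEqZero (hδ : 0 ≤ δ) (hε : 0 ≤ ε)
    (hM : ∀ t (h : t ≤ t + δ + ε), M.map h = 0) (hN : ∀ t (h : t ≤ t + ε + δ), N.map h = 0) :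
    Interleaving M N δ ε where
  hδ := hδ
  hε := hε
  f _ := 0
  g _ := 0
  f_nat _ _ _ := by rw [LinearMap.zero_comp, LinearMap.comp_zero]
  g_nat _ _ _ := by rw [LinearMap.zero_comp, LinearMap.comp_zero]
  gf t := by rw [LinearMap.comp_zero, hM]
  fg t := by rw [LinearMap.comp_zero, hN]

theorem nontrivial_of_map_ne_zero (I : Interleaving M N δ ε) {t : ℝ}
    (h : M.map (by linarith [I.hδ, I.hε] : t ≤ t + δ + ε) ≠ 0) : Nontrivial (N.V (t + δ)) := by
  by_contra hN
  rw [not_nontrivial_iff_subsingleton] at hN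
  apply h
  ext x
  rw [← I.gf t, LinearMap.comp_apply, Subsingleton.elim (I.f t x) 0, map_zero,
    LinearMap.zero_apply]

end Interleaving

section EndpointArithmetic

variable {a b a' b' δ : ℝ}

theorem endpoints_le_of_forall_shift_mem (hlong : 2 * δ < b - a)
    (h : ∀ t, a < t → t + δ + δ ≤ b → a' < t + δ ∧ t + δ ≤ b') : a' ≤ a + δ ∧ b ≤ b' + δ := by
  refine ⟨?_, by linarith [(h (b - δ - δ) (by linarith) (by linarith)).2]⟩
  by_contra! ha
  have hmin := min_le_left (a' - δ) (b - δ - δ)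
  have hmin' := min_le_right (a' - δ) (b - δ - δ)
  have := (h (min (a' - δ) (b - δ - δ)) (lt_min (by linarith) (by linarith)) (by linarith)).1
  linarith

theorem close_or_short_of_endpoints_le
    (h₁ : 2 * δ < b - a → a' ≤ a + δ ∧ b ≤ b' + δ)
    (h₂ : 2 * δ < b' - a' → a ≤ a' + δ ∧ b' ≤ b + δ) :
    (|a - a'| ≤ δ ∧ |b - b'| ≤ δ) ∨ (b - a ≤ 2 * δ ∧ b' - a' ≤ 2 * δ) := by
  rcases le_or_gt (b - a) (2 * δ) with hs | hl
  · rcases le_or_gt (b' - a') (2 * δ) with hs' | hl'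
    · exact Or.inr ⟨hs, hs'⟩
    · obtain ⟨_, _⟩ := h₂ hl'
      left; rw [abs_le, abs_le]; constructor <;> constructor <;> linarith
  · obtain ⟨_, _⟩ := h₁ hl
    left; rw [abs_le, abs_le]
    rcases le_or_gt (b' - a') (2 * δ) with hs' | hl'
    · constructor <;> constructor <;> linarith
    · obtain ⟨_, _⟩ := h₂ hl'
      constructor <;> constructor <;> linarith

end EndpointArithmetic

namespace IntervalMod

theorem map_eq_zero_iff {a : ℝ} {b : EReal} {s t : ℝ} (h : s ≤ t) :
    (IntervalMod K a b).map h = 0 ↔ ¬((a < s ∧ (s : EReal) ≤ b) ∧ (a < t ∧ (t : EReal) ≤ b)) :=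
  intervalMap_eq_zero_iff

theorem mem_of_interleaving {a a' : ℝ} {b b' : EReal} {δ ε : ℝ}
    (I : Interleaving (IntervalMod K a b) (IntervalMod K a' b') δ ε) {t : ℝ} (ht : a < t)
    (htb : ((t + δ + ε : ℝ) : EReal) ≤ b) : a' < t + δ ∧ ((t + δ : ℝ) : EReal) ≤ b' := by
  have hle : t ≤ t + δ + ε := by linarith [I.hδ, I.hε]
  refine nontrivial_condSub_iff.mp (I.nontrivial_of_map_ne_zero ?_)
  rw [Ne, map_eq_zero_iff, not_not]
  exact ⟨⟨ht, (EReal.coe_le_coe_iff.mpr hle).trans htb⟩, ⟨ht.trans_le hle, htb⟩⟩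

variable {a b a' b' δ : ℝ}

theorem map_eq_zero_of_sub_le {s t : ℝ} (h : s ≤ t) (hab : b - a ≤ t - s) :
    (IntervalMod K a b).map h = 0 := by
  rw [map_eq_zero_iff]
  rintro ⟨⟨hs, -⟩, -, htb⟩
  rw [EReal.coe_le_coe_iff] at htb
  linarith

def interleavingOfAbsSubLe (ha : |a - a'| ≤ δ) (hb : |b - b'| ≤ δ) :
    Interleaving (IntervalMod K a b) (IntervalMod K a' b') δ δ := by
  rw [abs_le] at ha hb
  refine
    { hδ := by linarith
      hε := by linarith
      f := fun _ => intervalMap K _ _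
      g := fun _ => intervalMap K _ _
      f_nat := fun _ _ _ => (intervalMap_comp ?_).trans (intervalMap_comp ?_).symm
      g_nat := fun _ _ _ => (intervalMap_comp ?_).trans (intervalMap_comp ?_).symm
      gf := fun _ => intervalMap_comp ?_
      fg := fun _ => intervalMap_comp ?_ }
  all_goals
    rintro ⟨_, _⟩ ⟨_, _⟩
    simp only [EReal.coe_le_coe_iff] at *
    constructor <;> linarith

theorem close_or_short_of_interleaving
    (I : Interleaving (IntervalMod K a b) (IntervalMod K a' b') δ δ) :
    (|a - a'| ≤ δ ∧ |b - b'| ≤ δ) ∨ (b - a ≤ 2 * δ ∧ b' - a' ≤ 2 * δ) := by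
  have shift_mem {a b a' b' : ℝ} (I : Interleaving (IntervalMod K a b) (IntervalMod K a' b') δ δ)
      (t : ℝ) (ht : a < t) (htb : t + δ + δ ≤ b) : a' < t + δ ∧ t + δ ≤ b' := by
    simpa only [EReal.coe_le_coe_iff] using
      mem_of_interleaving I ht (EReal.coe_le_coe_iff.mpr htb)
  exact close_or_short_of_endpoints_le
    (endpoints_le_of_forall_shift_mem · (shift_mem I))
    (endpoints_le_of_forall_shift_mem · (shift_mem I.symm))

end IntervalMod

theorem interval_interleaved_iff_general (K : Type u) [Field K] (a b a' b' : ℝ)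
    (δ : ℝ) (hδ : 0 ≤ δ) :
    Interleaved (IntervalMod K a (b : EReal)) (IntervalMod K a' (b' : EReal)) δ ↔
      (|a - a'| ≤ δ ∧ |b - b'| ≤ δ) ∨ (b - a ≤ 2 * δ ∧ b' - a' ≤ 2 * δ) := by
  refine ⟨fun ⟨I⟩ => IntervalMod.close_or_short_of_interleaving I, ?_⟩
  rintro (⟨ha, hb⟩ | ⟨hshort, hshort'⟩)
  · exact ⟨IntervalMod.interleavingOfAbsSubLe ha hb⟩
  · exact ⟨Interleaving.ofMapEqZero hδ hδ
      (fun _ h => IntervalMod.map_eq_zero_of_sub_le h (by linarith))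
      (fun _ h => IntervalMod.map_eq_zero_of_sub_le h (by linarith))⟩

/-- Two interval modules `K^{(a,b]}` and `K^{(a',b']}` are `δ`-interleaved
iff either `|a-a'| ≤ δ` and `|b-b'| ≤ δ`, or both intervals have length at most `2δ`. -/
theorem interval_interleaved_iff (K : Type u) [Field K] (a b a' b' : ℝ)
    (hab : a < b) (hab' : a' < b') (δ : ℝ) (hδ : 0 ≤ δ) :
    Interleaved (IntervalMod K a (b : EReal)) (IntervalMod K a' (b' : EReal)) δ ↔
      (|a - a'| ≤ δ ∧ |b - b'| ≤ δ) ∨ (b - a ≤ 2 * δ ∧ b' - a' ≤ 2 * δ) :=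
  interval_interleaved_iff_general K a b a' b' δ hδ
end
end
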